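/- Let D > 0, σ² > 0, ℓ > 0, C ≥ 0, γ > 0, and suppose the stationary constraint E[λ] = E[μX] holds with E[X] = ℓ·E[λ], γ = E[X]E[μ]/E[μX], and σ² = E[λ] + E[μ]·E[X]/γ, together with the variance bound Var[X] ≥ σ²/(2(C + E[μ])). Then the Fano factor F = Var[X]/E[X] satisfies F ≥ 1/(ℓC + γ). -/

import Mathlib

/-- Biomolecular converse bound: under the stationary constraints
`E[λ] = E[μX]`, Little's formula `E[X] = ℓ E[λ]`, the degradation efficiency
`γ = E[X]E[μ]/E[μX]`, the noise power `σ² = E[λ] + E[μ]E[X]/γ` and the variance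
bound `Var[X] ≥ σ²/(2(C + E[μ]))`, the Fano factor satisfies
`F = Var[X]/E[X] ≥ 1/(ℓC + γ)`. -/
theorem fano_converse (ℓ C γ σ2 V El Eμ EμX EX : ℝ)
    (hℓ : 0 < ℓ) (hC : 0 ≤ C) (hγ : 0 < γ) (hσ2 : 0 < σ2)
    (hEl : 0 < El) (hEμ : 0 < Eμ) (hEμX : EμX ≠ 0) (hEX : 0 < EX)
    (hstat : El = EμX) (hlittle : EX = ℓ * El)
    (hgamma : γ = EX * Eμ / EμX) (hnoise : σ2 = El + Eμ * EX / γ)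
    (hvar : V ≥ σ2 / (2 * (C + Eμ))) :
    V / EX ≥ 1 / (ℓ * C + γ) := by
  have hEl' : El ≠ 0 := ne_of_gt hEl
  have hγ' : γ = ℓ * Eμ := by rw [hgamma, hlittle, ← hstat]; field_simp
  have hσ' : σ2 = 2 * El := by
    rw [hnoise, hlittle, hγ']; field_simp; ring
  rw [hσ'] at hvar
  rw [hγ', hlittle, ge_iff_le, div_le_div_iff₀ (by positivity) (by positivity)]
  rw [ge_iff_le, div_le_iff₀ (by positivity)] at hvar
  nlinarith [mul_pos hEl hEμ, mul_pos hℓ hEμ]
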